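/- Let ρ : (0,∞) → ℝ be a continuously differentiable positive function with ρ(y) → 0 as y → 0⁺ and as y → ∞, and suppose that every critical point of ρ (a point where ρ' vanishes) is a strict local maximum. Then ρ has exactly one critical point y†, ρ is strictly increasing on (0, y†) and strictly decreasing on (y†, ∞). -/

import Mathlib

open Filter Set

/-- A positive `C¹` function on `(0,∞)` vanishing in the limit at both ends,
all of whose critical points are strict local maxima, has exactly one critical
point `y†`; it is strictly increasing on `(0, y†)` and strictly decreasing on
`(y†, ∞)`. -/
theorem unimodal_of_critical_points_strict_local_max
    (ρ : ℝ → ℝ)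
    (hpos : ∀ y : ℝ, 0 < y → 0 < ρ y)
    (hdiff : ∀ y : ℝ, 0 < y → DifferentiableAt ℝ ρ y)
    (hcont : ContinuousOn (deriv ρ) (Ioi 0))
    (h0 : Tendsto ρ (nhdsWithin 0 (Ioi 0)) (nhds 0))
    (htop : Tendsto ρ atTop (nhds 0))
    (hcrit : ∀ y₀ : ℝ, 0 < y₀ → deriv ρ y₀ = 0 →
      ∃ ε > 0, ∀ y : ℝ, 0 < y → y ∈ Ioo (y₀ - ε) (y₀ + ε) → y ≠ y₀ → ρ y < ρ y₀) :
    ∃ yd : ℝ, 0 < yd ∧ deriv ρ yd = 0 ∧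
      (∀ y : ℝ, 0 < y → deriv ρ y = 0 → y = yd) ∧
      StrictMonoOn ρ (Ioo 0 yd) ∧ StrictAntiOn ρ (Ioi yd) := by
  -- continuity of ρ on sets of positive reals
  have hcρ : ∀ s : Set ℝ, s ⊆ Ioi 0 → ContinuousOn ρ s := fun s hs y hy =>
    ((hdiff y (hs hy)).continuousAt).continuousWithinAt
  have hρ1 : 0 < ρ 1 := hpos 1 one_pos
  -- near 0, ρ < ρ 1
  obtain ⟨δ, hδ0, hδ⟩ : ∃ δ > (0:ℝ), ∀ y ∈ Ioc (0:ℝ) δ, ρ y < ρ 1 := by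
    have h : {y : ℝ | ρ y < ρ 1} ∈ nhdsWithin 0 (Ioi 0) := h0.eventually (gt_mem_nhds hρ1)
    rw [mem_nhdsGT_iff_exists_Ioc_subset] at h
    obtain ⟨u, hu, hsub⟩ := h
    exact ⟨u, hu, fun y hy => hsub hy⟩
  -- near ∞, ρ < ρ 1
  obtain ⟨B, hB⟩ : ∃ B : ℝ, ∀ y ≥ B, ρ y < ρ 1 :=
    eventually_atTop.mp (htop.eventually (gt_mem_nhds hρ1))
  set a := min δ 1 with ha_def
  set b := max B 1 with hb_def
  have ha0 : 0 < a := lt_min hδ0 one_pos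
  have hab : a ≤ b := le_trans (min_le_right _ _) (le_max_right _ _)
  have hIcc_pos : Icc a b ⊆ Ioi 0 := fun y hy => lt_of_lt_of_le ha0 hy.1
  obtain ⟨yd, hydmem, hydmax⟩ :=
    isCompact_Icc.exists_isMaxOn (nonempty_Icc.mpr hab) (hcρ _ hIcc_pos)
  have hyd : 0 < yd := lt_of_lt_of_le ha0 hydmem.1
  have h1mem : (1:ℝ) ∈ Icc a b := ⟨min_le_right _ _, le_max_right _ _⟩
  -- yd is a global max on (0,∞)
  have hglob : ∀ y : ℝ, 0 < y → ρ y ≤ ρ yd := by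
    intro y hy
    rcases le_or_gt y b with hyb | hyb
    · rcases le_or_gt a y with hay | hay
      · exact hydmax ⟨hay, hyb⟩
      · have hyδ : y ≤ δ := le_trans hay.le (min_le_left δ 1)
        have := hδ y ⟨hy, hyδ⟩
        exact this.le.trans (hydmax h1mem)
    · have := hB y (le_trans (le_max_left B 1) hyb.le)
      exact this.le.trans (hydmax h1mem)
  have hd0 : deriv ρ yd = 0 := by
    have hloc : IsLocalMax ρ yd := by
      filter_upwards [Ioi_mem_nhds hyd] with y hy using hglob y hy
    exact hloc.deriv_eq_zero
  -- no two distinct critical points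
  have key : ∀ u v : ℝ, 0 < u → u < v → deriv ρ u = 0 → deriv ρ v = 0 → False := by
    intro u v hu huv hdu hdv
    have hv : 0 < v := hu.trans huv
    have hIcc : Icc u v ⊆ Ioi 0 := fun y hy => lt_of_lt_of_le hu hy.1
    obtain ⟨m, hm, hmin⟩ :=
      isCompact_Icc.exists_isMinOn (nonempty_Icc.mpr huv.le) (hcρ _ hIcc)
    have hm0 : 0 < m := lt_of_lt_of_le hu hm.1
    -- deriv ρ m = 0 in every case
    have hdm : deriv ρ m = 0 := by
      rcases eq_or_lt_of_le hm.1 with h | h1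
      · rw [← h]; exact hdu
      rcases eq_or_lt_of_le hm.2 with h | h2
      · rw [h]; exact hdv
      · have hloc : IsLocalMin ρ m := by
          filter_upwards [Icc_mem_nhds h1 h2] with y hy using hmin hy
        exact hloc.deriv_eq_zero
    obtain ⟨ε, hε, hlt⟩ := hcrit m hm0 hdm
    rcases eq_or_lt_of_le hm.2 with h2 | h2
    · -- m = v, take a point just left of m
      have hum : u < m := h2 ▸ huv
      set w := max (m - ε/2) ((u + m)/2) with hw_def
      have hw1 : w < m := max_lt (by linarith) (by linarith)
      have hw2 : u ≤ w := le_trans (by linarith : u ≤ (u+m)/2) (le_max_right _ _)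
      have hw0 : 0 < w := lt_of_lt_of_le hu hw2
      have hwmem : w ∈ Ioo (m - ε) (m + ε) :=
        ⟨lt_of_lt_of_le (by linarith) (le_max_left _ _), by linarith⟩
      have hlt1 := hlt w hw0 hwmem (ne_of_lt hw1)
      have hge : ρ m ≤ ρ w := hmin ⟨hw2, le_trans hw1.le hm.2⟩
      linarith
    · -- m < v, take a point just right of m
      set w := min (m + ε/2) ((m + v)/2) with hw_def
      have hw1 : m < w := lt_min (by linarith) (by linarith)
      have hw2 : w ≤ v := le_trans (min_le_right _ _) (by linarith)
      have hw0 : 0 < w := hm0.trans hw1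
      have hwmem : w ∈ Ioo (m - ε) (m + ε) :=
        ⟨by linarith, lt_of_le_of_lt (min_le_left _ _) (by linarith)⟩
      have hlt1 := hlt w hw0 hwmem (ne_of_gt hw1)
      have hge : ρ m ≤ ρ w := hmin ⟨le_trans hm.1 hw1.le, hw2⟩
      linarith
  -- uniqueness
  have huniq : ∀ y : ℝ, 0 < y → deriv ρ y = 0 → y = yd := by
    intro y hy hdy
    rcases lt_trichotomy y yd with h | h | h
    · exact (key y yd hy h hdy hd0).elim
    · exact h
    · exact (key yd y hyd h hd0 hdy).elim
  have hne : ∀ y : ℝ, 0 < y → y ≠ yd → deriv ρ y ≠ 0 :=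
    fun y hy hney hz => hney (huniq y hy hz)
  -- intermediate value helpers
  have ivt : ∀ p q : ℝ, 0 < p → p ≤ q → deriv ρ p ≤ 0 → 0 ≤ deriv ρ q →
      ∃ r ∈ Icc p q, deriv ρ r = 0 := by
    intro p q hp hpq h1 h2
    have hsub : Icc p q ⊆ Ioi 0 := fun y hy => lt_of_lt_of_le hp hy.1
    obtain ⟨r, hr, hr0⟩ := intermediate_value_Icc hpq (hcont.mono hsub) ⟨h1, h2⟩
    exact ⟨r, hr, hr0⟩
  have ivt' : ∀ p q : ℝ, 0 < p → p ≤ q → 0 ≤ deriv ρ p → deriv ρ q ≤ 0 →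
      ∃ r ∈ Icc p q, deriv ρ r = 0 := by
    intro p q hp hpq h1 h2
    have hsub : Icc p q ⊆ Ioi 0 := fun y hy => lt_of_lt_of_le hp hy.1
    obtain ⟨r, hr, hr0⟩ := intermediate_value_Icc' hpq (hcont.mono hsub) ⟨h2, h1⟩
    exact ⟨r, hr, hr0⟩
  -- derivative is positive on (0, yd)
  have hposd : ∀ y ∈ Ioo (0:ℝ) yd, 0 < deriv ρ y := by
    by_contra hcon
    push_neg at hcon
    obtain ⟨p, hp, hple⟩ := hcon
    have hpneg : deriv ρ p < 0 := lt_of_le_of_ne hple (hne p hp.1 (ne_of_lt hp.2))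
    have hall : ∀ q ∈ Ioo (0:ℝ) yd, deriv ρ q < 0 := by
      intro q hq
      rcases lt_or_ge (deriv ρ q) 0 with h | h
      · exact h
      · exfalso
        rcases le_total p q with hpq | hqp
        · obtain ⟨r, hr, hr0⟩ := ivt p q hp.1 hpq hpneg.le h
          have heq : r = yd := huniq r (lt_of_lt_of_le hp.1 hr.1) hr0
          have : r < yd := lt_of_le_of_lt hr.2 hq.2
          linarith [heq ▸ this]
        · obtain ⟨r, hr, hr0⟩ := ivt' q p hq.1 hqp h hpneg.le
          have heq : r = yd := huniq r (lt_of_lt_of_le hq.1 hr.1) hr0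
          have : r < yd := lt_of_le_of_lt hr.2 hp.2
          linarith [heq ▸ this]
    have hanti : StrictAntiOn ρ (Ioo 0 yd) :=
      strictAntiOn_of_deriv_neg (convex_Ioo 0 yd) (hcρ _ (fun y hy => hy.1))
        (by rw [interior_Ioo]; exact hall)
    have hhalf : 0 < yd/2 := half_pos hyd
    obtain ⟨δ', hδ'0, hδ'⟩ : ∃ δ' > (0:ℝ), ∀ y ∈ Ioc (0:ℝ) δ', ρ y < ρ (yd/2) := by
      have h : {y : ℝ | ρ y < ρ (yd/2)} ∈ nhdsWithin 0 (Ioi 0) :=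
        h0.eventually (gt_mem_nhds (hpos _ hhalf))
      rw [mem_nhdsGT_iff_exists_Ioc_subset] at h
      obtain ⟨u, hu, hsub⟩ := h
      exact ⟨u, hu, fun y hy => hsub hy⟩
    set y := min δ' (yd/4) with hy_def
    have hy0 : 0 < y := lt_min hδ'0 (by linarith)
    have hyδ' : y ≤ δ' := min_le_left _ _
    have hylt : y < yd/2 := lt_of_le_of_lt (min_le_right _ _) (by linarith)
    have h1 : ρ y < ρ (yd/2) := hδ' y ⟨hy0, hyδ'⟩
    have h2 : ρ (yd/2) < ρ y :=
      hanti ⟨hy0, hylt.trans (by linarith)⟩ ⟨hhalf, by linarith⟩ hylt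
    linarith
  -- derivative is negative on (yd, ∞)
  have hnegd : ∀ y ∈ Ioi yd, deriv ρ y < 0 := by
    by_contra hcon
    push_neg at hcon
    obtain ⟨q, hq, hqle⟩ := hcon
    have hq0 : 0 < q := hyd.trans hq
    have hqpos : 0 < deriv ρ q :=
      lt_of_le_of_ne hqle (Ne.symm (hne q hq0 (ne_of_gt hq)))
    have hall : ∀ p ∈ Ioi yd, 0 < deriv ρ p := by
      intro p hp
      rcases lt_or_ge 0 (deriv ρ p) with h | h
      · exact h
      · exfalso
        rcases le_total p q with hpq | hqp
        · obtain ⟨r, hr, hr0⟩ := ivt p q (hyd.trans hp) hpq h hqpos.le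
          have heq : r = yd := huniq r (lt_of_lt_of_le (hyd.trans hp) hr.1) hr0
          have : yd < r := lt_of_lt_of_le hp hr.1
          linarith [heq ▸ this]
        · obtain ⟨r, hr, hr0⟩ := ivt' q p hq0 hqp hqpos.le h
          have heq : r = yd := huniq r (lt_of_lt_of_le hq0 hr.1) hr0
          have : yd < r := lt_of_lt_of_le hq hr.1
          linarith [heq ▸ this]
    have hmono : StrictMonoOn ρ (Ioi yd) :=
      strictMonoOn_of_deriv_pos (convex_Ioi yd) (hcρ _ (fun y hy => hyd.trans hy))
        (by rw [interior_Ioi]; exact hall)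
    obtain ⟨B', hB'⟩ : ∃ B' : ℝ, ∀ y ≥ B', ρ y < ρ (yd + 1) :=
      eventually_atTop.mp (htop.eventually (gt_mem_nhds (hpos _ (by linarith))))
    set z := max B' (yd + 2) with hz_def
    have hz1 : yd + 2 ≤ z := le_max_right _ _
    have h1 : ρ z < ρ (yd + 1) := hB' z (le_max_left _ _)
    have h2 : ρ (yd + 1) < ρ z :=
      hmono (mem_Ioi.mpr (by linarith)) (mem_Ioi.mpr (by linarith)) (by linarith)
    linarith
  refine ⟨yd, hyd, hd0, huniq, ?_, ?_⟩
  · exact strictMonoOn_of_deriv_pos (convex_Ioo 0 yd) (hcρ _ (fun y hy => hy.1))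
      (by rw [interior_Ioo]; exact hposd)
  · exact strictAntiOn_of_deriv_neg (convex_Ioi yd) (hcρ _ (fun y hy => hyd.trans hy))
      (by rw [interior_Ioi]; exact hnegd)
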